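/- Let ε > 0 and let (w_{ij}) be nonnegative weights satisfying Σ_{j≠i} w_{ji} ≤ (1/(1+ε))·(w_{ii} + Σ_{j≠i} w_{ij}) for every node i. Then for any pure Nash equilibrium z and any profile o of the associated opinion formation game, C(z) ≤ (1 + 1/ε)·C(o); i.e., the price of anarchy is at most 1 + 1/ε. -/

import Mathlib

/-- Individual cost in the opinion formation game. -/
def opCost (n : ℕ) (w : Fin n → Fin n → ℝ) (s : Fin n → ℝ) (i : Fin n)
    (z : Fin n → ℝ) : ℝ :=
  w i i * (z i - s i) ^ 2 + ∑ j ∈ Finset.univ.erase i, w i j * (z i - z j) ^ 2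

/-!
Player `i`'s cost, as a function of its own opinion `t`, is a quadratic with leading
coefficient `D i = w i i + ∑_{j ≠ i} w i j`; at an equilibrium it is minimised at `t = z i`,
so replacing `z i` by `o i` raises it by exactly `D i (o i - z i)²`. On the other hand
`(a + b)² ≤ (1 + 1/ε) a² + (1 + ε) b²` bounds that deviation cost by `(1 + 1/ε) C_i(o)`
plus `(1 + ε) ∑_{j ≠ i} w i j (o j - z j)²`. Summed over `i`, these error terms regroup by `j`
with coefficient `(1 + ε) ∑_{i ≠ j} w i j ≤ D j`, so the terms `D j (o j - z j)²` absorb them.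
-/

open Finset

lemma add_sq_le_one_add_inv_mul_sq_add_one_add_mul_sq {ε : ℝ} (hε : 0 < ε) (a b : ℝ) :
    (a + b) ^ 2 ≤ (1 + 1 / ε) * a ^ 2 + (1 + ε) * b ^ 2 := by
  have h : (1 + 1 / ε) * a ^ 2 + (1 + ε) * b ^ 2 - (a + b) ^ 2 = (a - ε * b) ^ 2 / ε := by
    field_simp
    ring
  have : 0 ≤ (a - ε * b) ^ 2 / ε := by positivity
  linarith

lemma eq_zero_of_forall_mul_sq_add_mul_nonneg {a b : ℝ} (h : ∀ u : ℝ, 0 ≤ a * u ^ 2 + b * u) :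
    b = 0 := by
  have hdisc : discrim a b 0 ≤ 0 := discrim_le_zero fun u => by simpa [sq] using h u
  rw [discrim, mul_zero, sub_zero] at hdisc
  exact pow_eq_zero_iff two_ne_zero |>.mp (le_antisymm hdisc (sq_nonneg b))

lemma sum_mul_sub_sq_eq {ι : Type*} (S : Finset ι) (c x : ι → ℝ) (z t : ℝ) :
    ∑ k ∈ S, c k * (t - x k) ^ 2 = ∑ k ∈ S, c k * (z - x k) ^ 2
      + (∑ k ∈ S, c k) * (t - z) ^ 2 + 2 * (∑ k ∈ S, c k * (z - x k)) * (t - z) := by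
  simp only [sum_mul, mul_sum, ← sum_add_distrib]
  exact sum_congr rfl fun k _ => by ring

lemma sum_sum_erase_comm {ι : Type*} [Fintype ι] [DecidableEq ι] (f : ι → ι → ℝ) :
    ∑ i, ∑ j ∈ univ.erase i, f i j = ∑ j, ∑ i ∈ univ.erase j, f i j :=
  sum_comm' fun i j => by simp [ne_comm]

section OpinionGame

variable {n : ℕ} (w : Fin n → Fin n → ℝ) (s : Fin n → ℝ)

def opWeight (i : Fin n) : ℝ := w i i + ∑ j ∈ univ.erase i, w i j

lemma opCost_update_self (z : Fin n → ℝ) (i : Fin n) (t : ℝ) :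
    opCost n w s i (Function.update z i t)
      = w i i * (t - s i) ^ 2 + ∑ j ∈ univ.erase i, w i j * (t - z j) ^ 2 := by
  simp only [opCost, Function.update_self]
  congr 1
  exact sum_congr rfl fun j hj => by rw [Function.update_of_ne (ne_of_mem_erase hj)]

lemma opCost_update_self_eq (z : Fin n → ℝ) (i : Fin n) (t : ℝ) :
    opCost n w s i (Function.update z i t) = opCost n w s i z + opWeight w i * (t - z i) ^ 2
      + 2 * (w i i * (z i - s i) + ∑ j ∈ univ.erase i, w i j * (z i - z j)) * (t - z i) := by
  rw [opCost_update_self, sum_mul_sub_sq_eq _ _ _ (z i), opCost, opWeight]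
  ring

lemma opCost_update_self_eq_of_forall_le {z : Fin n → ℝ} {i : Fin n}
    (hmin : ∀ t, opCost n w s i z ≤ opCost n w s i (Function.update z i t)) (t : ℝ) :
    opCost n w s i (Function.update z i t) = opCost n w s i z + opWeight w i * (t - z i) ^ 2 := by
  have hgrad : 2 * (w i i * (z i - s i) + ∑ j ∈ univ.erase i, w i j * (z i - z j)) = 0 := by
    refine eq_zero_of_forall_mul_sq_add_mul_nonneg (a := opWeight w i) fun u => ?_
    have := hmin (z i + u)
    rw [opCost_update_self_eq, add_sub_cancel_left] at this
    linarith
  rw [opCost_update_self_eq, hgrad, zero_mul, add_zero]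

lemma opCost_update_self_le {ε : ℝ} (hε : 0 < ε) (hw : ∀ i j, 0 ≤ w i j)
    (z o : Fin n → ℝ) (i : Fin n) :
    opCost n w s i (Function.update z i (o i)) ≤ (1 + 1 / ε) * opCost n w s i o
      + (1 + ε) * ∑ j ∈ univ.erase i, w i j * (o j - z j) ^ 2 := by
  have hself : w i i * (o i - s i) ^ 2 ≤ (1 + 1 / ε) * (w i i * (o i - s i) ^ 2) :=
    le_mul_of_one_le_left (mul_nonneg (hw i i) (sq_nonneg _)) (le_add_of_nonneg_right (by positivity))
  have hothers : ∀ j ∈ univ.erase i, w i j * (o i - z j) ^ 2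
      ≤ (1 + 1 / ε) * (w i j * (o i - o j) ^ 2) + (1 + ε) * (w i j * (o j - z j) ^ 2) := by
    intro j _
    have := mul_le_mul_of_nonneg_left
      (add_sq_le_one_add_inv_mul_sq_add_one_add_mul_sq hε (o i - o j) (o j - z j)) (hw i j)
    rw [sub_add_sub_cancel] at this
    linarith
  rw [opCost_update_self, opCost, mul_add, mul_sum, mul_sum, add_assoc, ← sum_add_distrib]
  exact add_le_add hself (sum_le_sum hothers)

lemma mul_sum_sum_erase_le_sum_opWeight_mul {c : ℝ}
    (hin : ∀ i, c * ∑ j ∈ univ.erase i, w j i ≤ opWeight w i) (x : Fin n → ℝ) :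
    c * ∑ i, ∑ j ∈ univ.erase i, w i j * x j ^ 2 ≤ ∑ j, opWeight w j * x j ^ 2 := by
  rw [sum_sum_erase_comm, mul_sum]
  refine sum_le_sum fun j _ => ?_
  rw [← sum_mul, ← mul_assoc]
  exact mul_le_mul_of_nonneg_right (hin j) (sq_nonneg _)

end OpinionGame

theorem poa_bound (n : ℕ) (w : Fin n → Fin n → ℝ)
    (hw : ∀ i j, 0 ≤ w i j) (ε : ℝ) (hε : 0 < ε)
    (hcond : ∀ i : Fin n, ∑ j ∈ Finset.univ.erase i, w j i
        ≤ (1 / (1 + ε)) * (w i i + ∑ j ∈ Finset.univ.erase i, w i j))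
    (s z o : Fin n → ℝ)
    (hnash : ∀ i : Fin n, ∀ t : ℝ,
      opCost n w s i z ≤ opCost n w s i (Function.update z i t)) :
    ∑ i, opCost n w s i z ≤ (1 + 1 / ε) * ∑ i, opCost n w s i o := by
  have hdev : ∀ i, opCost n w s i z + opWeight w i * (o i - z i) ^ 2
      ≤ (1 + 1 / ε) * opCost n w s i o
        + (1 + ε) * ∑ j ∈ univ.erase i, w i j * (o j - z j) ^ 2 := fun i => by
    rw [← opCost_update_self_eq_of_forall_le w s (hnash i)]
    exact opCost_update_self_le w s hε hw z o i
  have hin : ∀ i, (1 + ε) * ∑ j ∈ univ.erase i, w j i ≤ opWeight w i := fun i => by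
    rw [← le_div_iff₀' (by positivity), ← one_div_mul_eq_div]
    exact hcond i
  have hsum := sum_le_sum fun i (_ : i ∈ univ) => hdev i
  simp only [sum_add_distrib, ← mul_sum] at hsum
  linarith [mul_sum_sum_erase_le_sum_opWeight_mul w hin fun j => o j - z j]
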